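/- Let G be a spider with head R, body K and feet S, and let M(H) denote the minimum number of vertices to delete from H to make it P4-free. Then M(G) = M(G[R]) + M(G[K ∪ S]). -/
import Mathlib


open SimpleGraph

variable {V : Type*}

/-- The four (distinct) vertices `a, b, c, d` induce a path `a - b - c - d` in `G`. -/
def IsInducedP4 (G : SimpleGraph V) (a b c d : V) : Prop :=
  a ≠ b ∧ a ≠ c ∧ a ≠ d ∧ b ≠ c ∧ b ≠ d ∧ c ≠ d ∧
  G.Adj a b ∧ G.Adj b c ∧ G.Adj c d ∧ ¬ G.Adj a c ∧ ¬ G.Adj a d ∧ ¬ G.Adj b d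

/-- A graph is `P₄`-free if no four vertices induce a path on four vertices. -/
def P4Free (G : SimpleGraph V) : Prop := ∀ a b c d : V, ¬ IsInducedP4 G a b c d

/-- `M G`: the minimum number of vertex deletions turning `G` into a `P₄`-free graph. -/
noncomputable def minCographVertexDel (G : SimpleGraph V) : ℕ :=
  sInf {n : ℕ | ∃ X : Finset V, X.card = n ∧ P4Free (G.induce ((↑X : Set V)ᶜ))}

/-! ### Auxiliary material -/

/-- Labels for the three parts of a spider. -/
inductive SpiderLbl | r | k | s
deriving DecidableEq

instance : Fintype SpiderLbl :=
  ⟨{.r, .k, .s}, by intro x; cases x <;> decide⟩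

/-- Allowed label pairs for an edge of the spider. -/
def spEok (a b : SpiderLbl) : Prop :=
  ¬(a = .s ∧ b = .s) ∧ ¬(a = .r ∧ b = .s) ∧ ¬(a = .s ∧ b = .r)

/-- Allowed label pairs for a non-edge of the spider. -/
def spNok (a b : SpiderLbl) : Prop :=
  ¬(a = .k ∧ b = .k) ∧ ¬(a = .r ∧ b = .k) ∧ ¬(a = .k ∧ b = .r)

instance (a b : SpiderLbl) : Decidable (spEok a b) := by unfold spEok; infer_instance
instance (a b : SpiderLbl) : Decidable (spNok a b) := by unfold spNok; infer_instance

/-- Any induced `P₄` of a spider lies entirely in the head or entirely in the body∪feet. -/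
lemma spider_key : ∀ a b c d : SpiderLbl, spEok a b → spEok b c → spEok c d →
    spNok a c → spNok a d → spNok b d →
    (a = .r ∧ b = .r ∧ c = .r ∧ d = .r) ∨ (a ≠ .r ∧ b ≠ .r ∧ c ≠ .r ∧ d ≠ .r) := by
  decide

/-- `P4Free` pulls back along injective graph maps that reflect adjacency. -/
lemma P4Free.of_map {W : Type*} {G : SimpleGraph V} {G' : SimpleGraph W} (f : W → V)
    (hf : Function.Injective f) (hadj : ∀ x y, G'.Adj x y ↔ G.Adj (f x) (f y))
    (h : P4Free G) : P4Free G' := by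
  rintro a b c d ⟨h1, h2, h3, h4, h5, h6, e1, e2, e3, n1, n2, n3⟩
  exact h (f a) (f b) (f c) (f d)
    ⟨fun e => h1 (hf e), fun e => h2 (hf e), fun e => h3 (hf e),
     fun e => h4 (hf e), fun e => h5 (hf e), fun e => h6 (hf e),
     (hadj _ _).1 e1, (hadj _ _).1 e2, (hadj _ _).1 e3,
     fun e => n1 ((hadj _ _).2 e), fun e => n2 ((hadj _ _).2 e), fun e => n3 ((hadj _ _).2 e)⟩

/-- The infimum defining `minCographVertexDel` is attained. -/
lemma minCographVertexDel_spec [Fintype V] (G : SimpleGraph V) :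
    ∃ X : Finset V, X.card = minCographVertexDel G ∧
      P4Free (G.induce ((↑X : Set V)ᶜ)) := by
  have hne : {n : ℕ | ∃ X : Finset V, X.card = n ∧
      P4Free (G.induce ((↑X : Set V)ᶜ))}.Nonempty := by
    refine ⟨(Finset.univ : Finset V).card, Finset.univ, rfl, ?_⟩
    rintro ⟨a, ha⟩ b c d h
    simp at ha
  exact Nat.sInf_mem hne

lemma minCographVertexDel_le [Fintype V] (G : SimpleGraph V) (X : Finset V)
    (h : P4Free (G.induce ((↑X : Set V)ᶜ))) : minCographVertexDel G ≤ X.card :=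
  Nat.sInf_le ⟨X, rfl, h⟩

/-- Restricting a good deletion set to an induced subgraph keeps it good. -/
lemma P4Free.restrict [Fintype V] (G : SimpleGraph V) (X : Finset V) (A : Set V)
    [DecidablePred (· ∈ A)] (h : P4Free (G.induce ((↑X : Set V)ᶜ))) :
    P4Free ((G.induce A).induce ((↑(X.subtype (· ∈ A)) : Set ↥A)ᶜ)) := by
  refine P4Free.of_map (G := G.induce ((↑X : Set V)ᶜ))
    (fun u => ⟨u.1.1, ?_⟩) ?_ (fun x y => Iff.rfl) h
  · have hu := u.2
    simp only [Set.mem_compl_iff, Finset.mem_coe, Finset.mem_subtype] at hu ⊢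
    exact hu
  · intro u v huv
    simpa [Subtype.ext_iff] using huv

/-- For a spider `G` (thin or thick) with body `K`, feet `S` and head `R`, the
minimum number of vertex deletions making `G` `P₄`-free satisfies
`M(G) = M(G[R]) + M(G[K ∪ S])`. -/
theorem spider_minCographVertexDel_decomposition [Fintype V]
    (G : SimpleGraph V) (K S R : Set V)
    (hcover : K ∪ S ∪ R = Set.univ)
    (hKS : Disjoint K S) (hKR : Disjoint K R) (hSR : Disjoint S R)
    (hclique : G.IsClique K)
    (hstable : ∀ s1 ∈ S, ∀ s2 ∈ S, ¬ G.Adj s1 s2)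
    (hRK : ∀ r ∈ R, ∀ k ∈ K, G.Adj r k)
    (hRS : ∀ r ∈ R, ∀ s ∈ S, ¬ G.Adj r s)
    (hsize : 2 ≤ K.ncard) (heq : S.ncard = K.ncard)
    (hlegs : ((∀ s ∈ S, ∃! k, k ∈ K ∧ G.Adj s k) ∧ (∀ k ∈ K, ∃! s, s ∈ S ∧ G.Adj k s)) ∨
      ((∀ s ∈ S, ∃! k, k ∈ K ∧ ¬ G.Adj s k) ∧ (∀ k ∈ K, ∃! s, s ∈ S ∧ ¬ G.Adj k s))) :
    minCographVertexDel G =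
      minCographVertexDel (G.induce R) + minCographVertexDel (G.induce (K ∪ S)) := by
  classical
  set B : Set V := K ∪ S with hBdef
  have hmem : ∀ v : V, v ∈ K ∨ v ∈ S ∨ v ∈ R := by
    intro v
    have hv : v ∈ K ∪ S ∪ R := hcover ▸ Set.mem_univ v
    rcases hv with (h | h) | h
    · exact Or.inl h
    · exact Or.inr (Or.inl h)
    · exact Or.inr (Or.inr h)
  have hdisjRB : Disjoint R B := hKR.symm.union_right hSR.symm
  -- labels
  let lbl : V → SpiderLbl := fun v => if v ∈ K then .k else if v ∈ S then .s else .r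
  have lblK : ∀ v, lbl v = SpiderLbl.k → v ∈ K := by
    intro v h
    simp only [lbl] at h
    split_ifs at h with h1 h2
    exact h1
  have lblS : ∀ v, lbl v = SpiderLbl.s → v ∈ S := by
    intro v h
    simp only [lbl] at h
    split_ifs at h with h1 h2
    exact h2
  have lblR : ∀ v, lbl v = SpiderLbl.r → v ∈ R := by
    intro v h
    simp only [lbl] at h
    split_ifs at h with h1 h2
    rcases hmem v with hv | hv | hv
    · exact absurd hv h1
    · exact absurd hv h2
    · exact hv
  have lblB : ∀ v, lbl v ≠ SpiderLbl.r → v ∈ B := by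
    intro v h
    simp only [lbl] at h
    split_ifs at h with h1 h2
    · exact Or.inl h1
    · exact Or.inr h2
    · exact absurd rfl h
  have hEok : ∀ x y : V, G.Adj x y → spEok (lbl x) (lbl y) := by
    intro x y hxy
    refine ⟨?_, ?_, ?_⟩
    · rintro ⟨hx, hy⟩
      exact hstable x (lblS x hx) y (lblS y hy) hxy
    · rintro ⟨hx, hy⟩
      exact hRS x (lblR x hx) y (lblS y hy) hxy
    · rintro ⟨hx, hy⟩
      exact hRS y (lblR y hy) x (lblS x hx) hxy.symm
  have hNok : ∀ x y : V, x ≠ y → ¬ G.Adj x y → spNok (lbl x) (lbl y) := by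
    intro x y hne hxy
    refine ⟨?_, ?_, ?_⟩
    · rintro ⟨hx, hy⟩
      exact hxy (hclique (lblK x hx) (lblK y hy) hne)
    · rintro ⟨hx, hy⟩
      exact hxy (hRK x (lblR x hx) y (lblK y hy))
    · rintro ⟨hx, hy⟩
      exact hxy ((hRK y (lblR y hy) x (lblK x hx)).symm)
  refine le_antisymm ?_ ?_
  · -- M(G) ≤ M(G[R]) + M(G[B])
    obtain ⟨YR, hYRcard, hYRfree⟩ := minCographVertexDel_spec (G.induce R)
    obtain ⟨YB, hYBcard, hYBfree⟩ := minCographVertexDel_spec (G.induce B)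
    set mR : Finset V := YR.map ⟨Subtype.val, Subtype.val_injective⟩ with hmR
    set mB : Finset V := YB.map ⟨Subtype.val, Subtype.val_injective⟩ with hmB
    have hmRsub : ∀ v ∈ mR, v ∈ R := by
      intro v hv
      rw [hmR, Finset.mem_map] at hv
      obtain ⟨u, _, rfl⟩ := hv
      exact u.2
    have hmBsub : ∀ v ∈ mB, v ∈ B := by
      intro v hv
      rw [hmB, Finset.mem_map] at hv
      obtain ⟨u, _, rfl⟩ := hv
      exact u.2
    have hdisj : Disjoint mR mB := by
      rw [Finset.disjoint_left]
      intro v hvR hvB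
      exact Set.disjoint_left.mp hdisjRB (hmRsub v hvR) (hmBsub v hvB)
    have hcard : (mR ∪ mB).card =
        minCographVertexDel (G.induce R) + minCographVertexDel (G.induce B) := by
      rw [Finset.card_union_of_disjoint hdisj, hmR, hmB, Finset.card_map, Finset.card_map,
        hYRcard, hYBcard]
    rw [← hcard]
    apply minCographVertexDel_le
    rintro ⟨a, ha⟩ ⟨b, hb⟩ ⟨c, hc⟩ ⟨d, hd⟩ ⟨h1, h2, h3, h4, h5, h6, e1, e2, e3, n1, n2, n3⟩
    simp only [Set.mem_compl_iff, Finset.mem_coe, Finset.mem_union] at ha hb hc hd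
    have e1' : G.Adj a b := e1
    have e2' : G.Adj b c := e2
    have e3' : G.Adj c d := e3
    have n1' : ¬ G.Adj a c := fun h => n1 h
    have n2' : ¬ G.Adj a d := fun h => n2 h
    have n3' : ¬ G.Adj b d := fun h => n3 h
    have hab : a ≠ b := fun h => h1 (Subtype.ext h)
    have hac : a ≠ c := fun h => h2 (Subtype.ext h)
    have had : a ≠ d := fun h => h3 (Subtype.ext h)
    have hbc : b ≠ c := fun h => h4 (Subtype.ext h)
    have hbd : b ≠ d := fun h => h5 (Subtype.ext h)
    have hcd : c ≠ d := fun h => h6 (Subtype.ext h)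
    rcases spider_key (lbl a) (lbl b) (lbl c) (lbl d) (hEok a b e1') (hEok b c e2')
        (hEok c d e3') (hNok a c hac n1') (hNok a d had n2') (hNok b d hbd n3')
      with ⟨la, lc0, lc1, lc2⟩ | ⟨la, lc0, lc1, lc2⟩
    · -- all in R : contradiction with hYRfree
      have haR := lblR a la
      have hbR := lblR b lc0
      have hcR := lblR c lc1
      have hdR := lblR d lc2
      have notmem : ∀ (v : V) (hvR : v ∈ R), ¬(v ∈ mR ∨ v ∈ mB) →
          (⟨v, hvR⟩ : ↥R) ∈ ((↑YR : Set ↥R)ᶜ) := by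
        intro v hvR hv hmemYR
        exact hv (Or.inl (Finset.mem_map.2 ⟨⟨v, hvR⟩, Finset.mem_coe.mp hmemYR, rfl⟩))
      refine hYRfree ⟨⟨a, haR⟩, notmem a haR ha⟩ ⟨⟨b, hbR⟩, notmem b hbR hb⟩
        ⟨⟨c, hcR⟩, notmem c hcR hc⟩ ⟨⟨d, hdR⟩, notmem d hdR hd⟩
        ⟨?_, ?_, ?_, ?_, ?_, ?_, e1', e2', e3', n1', n2', n3'⟩
      · exact fun h => hab (congrArg (fun u => u.1.1) h)
      · exact fun h => hac (congrArg (fun u => u.1.1) h)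
      · exact fun h => had (congrArg (fun u => u.1.1) h)
      · exact fun h => hbc (congrArg (fun u => u.1.1) h)
      · exact fun h => hbd (congrArg (fun u => u.1.1) h)
      · exact fun h => hcd (congrArg (fun u => u.1.1) h)
    · -- all in B : contradiction with hYBfree
      have haB := lblB a la
      have hbB := lblB b lc0
      have hcB := lblB c lc1
      have hdB := lblB d lc2
      have notmem : ∀ (v : V) (hvB : v ∈ B), ¬(v ∈ mR ∨ v ∈ mB) →
          (⟨v, hvB⟩ : ↥B) ∈ ((↑YB : Set ↥B)ᶜ) := by
        intro v hvB hv hmemYB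
        exact hv (Or.inr (Finset.mem_map.2 ⟨⟨v, hvB⟩, Finset.mem_coe.mp hmemYB, rfl⟩))
      refine hYBfree ⟨⟨a, haB⟩, notmem a haB ha⟩ ⟨⟨b, hbB⟩, notmem b hbB hb⟩
        ⟨⟨c, hcB⟩, notmem c hcB hc⟩ ⟨⟨d, hdB⟩, notmem d hdB hd⟩
        ⟨?_, ?_, ?_, ?_, ?_, ?_, e1', e2', e3', n1', n2', n3'⟩
      · exact fun h => hab (congrArg (fun u => u.1.1) h)
      · exact fun h => hac (congrArg (fun u => u.1.1) h)
      · exact fun h => had (congrArg (fun u => u.1.1) h)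
      · exact fun h => hbc (congrArg (fun u => u.1.1) h)
      · exact fun h => hbd (congrArg (fun u => u.1.1) h)
      · exact fun h => hcd (congrArg (fun u => u.1.1) h)
  · -- M(G[R]) + M(G[B]) ≤ M(G)
    obtain ⟨X0, hX0card, hX0free⟩ := minCographVertexDel_spec G
    have hfR : minCographVertexDel (G.induce R) ≤ (X0.filter (· ∈ R)).card := by
      have h := minCographVertexDel_le (G.induce R) (X0.subtype (· ∈ R))
        (P4Free.restrict G X0 R hX0free)
      rwa [Finset.card_subtype] at h
    have hfB : minCographVertexDel (G.induce B) ≤ (X0.filter (· ∈ B)).card := by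
      have h := minCographVertexDel_le (G.induce B) (X0.subtype (· ∈ B))
        (P4Free.restrict G X0 B hX0free)
      rwa [Finset.card_subtype] at h
    have hpart : (X0.filter (· ∈ R)).card + (X0.filter (· ∈ B)).card = X0.card := by
      have hBR : X0.filter (· ∈ B) = X0.filter (fun v => ¬ v ∈ R) := by
        apply Finset.filter_congr
        intro v _
        constructor
        · intro hvB hvR
          exact Set.disjoint_left.mp hdisjRB hvR hvB
        · intro hvR
          rcases hmem v with hv | hv | hv
          · exact Or.inl hv
          · exact Or.inr hv
          · exact absurd hv hvR
      rw [hBR, Finset.card_filter_add_card_filter_not]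
    calc minCographVertexDel (G.induce R) + minCographVertexDel (G.induce B)
        ≤ (X0.filter (· ∈ R)).card + (X0.filter (· ∈ B)).card := Nat.add_le_add hfR hfB
      _ = X0.card := hpart
      _ = minCographVertexDel G := hX0card
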